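/- Let f, h : ℝⁿ → ℝ be smooth, f positive with ∂f/∂xᵢ ≠ 0 everywhere for all i, m ≥ 1, ρ ∈ ℝ. If for all i ≠ j: f·∂²h/∂xᵢ∂xⱼ − m·∂²f/∂xᵢ∂xⱼ = 0 and for all i: f·∂²h/∂xᵢ² − m·∂²f/∂xᵢ² = ρ·f, then for all i ≠ j: (∂f/∂xⱼ)·(∂²f/∂xᵢ²) − (∂f/∂xᵢ)·(∂²f/∂xᵢ∂xⱼ) = 0. -/

import Mathlib

noncomputable def pd {n : ℕ} (i : Fin n) (f : (Fin n → ℝ) → ℝ) : (Fin n → ℝ) → ℝ :=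
  fun x => fderiv ℝ f x (Pi.single i 1)

private lemma pd_contDiff {n : ℕ} (i : Fin n) {f : (Fin n → ℝ) → ℝ}
    (hf : ContDiff ℝ (⊤ : ℕ∞) f) : ContDiff ℝ (⊤ : ℕ∞) (pd i f) := by
  have h2 : ContDiff ℝ (⊤ : ℕ∞) (⇑(ContinuousLinearMap.apply ℝ ℝ (Pi.single i (1:ℝ))) ∘ fderiv ℝ f) :=
    (ContinuousLinearMap.apply ℝ ℝ (Pi.single i (1:ℝ))).contDiff.comp
      (hf.fderiv_right (m := (⊤ : ℕ∞)) (by simp))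
  exact h2

private lemma fderiv_pd {n : ℕ} (i : Fin n) {f : (Fin n → ℝ) → ℝ}
    (hf : ContDiff ℝ (⊤ : ℕ∞) f) (x v : Fin n → ℝ) :
    fderiv ℝ (pd i f) x v = fderiv ℝ (fderiv ℝ f) x v (Pi.single i 1) := by
  have hdf : DifferentiableAt ℝ (fderiv ℝ f) x :=
    ((hf.fderiv_right (m := (⊤ : ℕ∞)) (by simp)).differentiable (by simp)).differentiableAt
  have he : pd i f = (ContinuousLinearMap.apply ℝ ℝ (Pi.single i (1:ℝ))) ∘ (fderiv ℝ f) := rfl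
  rw [he, fderiv_comp x (ContinuousLinearMap.differentiableAt _) hdf]
  simp

private lemma pd_comm {n : ℕ} (i j : Fin n) {f : (Fin n → ℝ) → ℝ}
    (hf : ContDiff ℝ (⊤ : ℕ∞) f) (x : Fin n → ℝ) :
    pd i (pd j f) x = pd j (pd i f) x := by
  have hs : IsSymmSndFDerivAt ℝ f x := hf.contDiffAt.isSymmSndFDerivAt (by rw [minSmoothness_of_isRCLikeNormedField]; exact WithTop.coe_le_coe.mpr (le_top : (2 : ℕ∞) ≤ ⊤))
  show fderiv ℝ (pd j f) x (Pi.single i 1) = fderiv ℝ (pd i f) x (Pi.single j 1)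
  rw [fderiv_pd j hf, fderiv_pd i hf]
  exact hs _ _

private lemma pd_mul {n : ℕ} (j : Fin n) {f g : (Fin n → ℝ) → ℝ} {x : Fin n → ℝ}
    (hf : DifferentiableAt ℝ f x) (hg : DifferentiableAt ℝ g x) :
    pd j (fun y => f y * g y) x = f x * pd j g x + g x * pd j f x := by
  simp [pd, fderiv_fun_mul hf hg]

private lemma pd_add {n : ℕ} (j : Fin n) {f g : (Fin n → ℝ) → ℝ} {x : Fin n → ℝ}
    (hf : DifferentiableAt ℝ f x) (hg : DifferentiableAt ℝ g x) :
    pd j (fun y => f y + g y) x = pd j f x + pd j g x := by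
  simp [pd, fderiv_fun_add hf hg]

private lemma pd_const_mul {n : ℕ} (j : Fin n) (c : ℝ) {f : (Fin n → ℝ) → ℝ} {x : Fin n → ℝ}
    (hf : DifferentiableAt ℝ f x) :
    pd j (fun y => c * f y) x = c * pd j f x := by
  simp [pd, fderiv_const_mul hf]

theorem stmt1 {n m : ℕ} (hn : 2 ≤ n) (hm : 1 ≤ m) (ρ : ℝ)
    (f h : (Fin n → ℝ) → ℝ) (hf : ContDiff ℝ (⊤ : ℕ∞) f) (hh : ContDiff ℝ (⊤ : ℕ∞) h)
    (hfpos : ∀ x, 0 < f x)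
    (hfd : ∀ i : Fin n, ∀ x, pd i f x ≠ 0)
    (heq1 : ∀ i j : Fin n, i ≠ j → ∀ x,
      f x * pd j (pd i h) x - (m : ℝ) * pd j (pd i f) x = 0)
    (heq2 : ∀ i : Fin n, ∀ x,
      f x * pd i (pd i h) x - (m : ℝ) * pd i (pd i f) x = ρ * f x) :
    ∀ i j : Fin n, i ≠ j → ∀ x,
      pd j f x * pd i (pd i f) x - pd i f x * pd j (pd i f) x = 0 := by
  intro i j hij x
  have hfi : ContDiff ℝ (⊤ : ℕ∞) (pd i f) := pd_contDiff i hf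
  have hhi : ContDiff ℝ (⊤ : ℕ∞) (pd i h) := pd_contDiff i hh
  have hfd' : DifferentiableAt ℝ f x := (hf.differentiable (by simp)).differentiableAt
  have hhiid : DifferentiableAt ℝ (pd i (pd i h)) x :=
    ((pd_contDiff i hhi).differentiable (by simp)).differentiableAt
  have hhijd : DifferentiableAt ℝ (pd j (pd i h)) x :=
    ((pd_contDiff j hhi).differentiable (by simp)).differentiableAt
  have hfiid : DifferentiableAt ℝ (pd i (pd i f)) x :=
    ((pd_contDiff i hfi).differentiable (by simp)).differentiableAt
  have hfijd : DifferentiableAt ℝ (pd j (pd i f)) x :=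
    ((pd_contDiff j hfi).differentiable (by simp)).differentiableAt
  -- Apply pd j to the diagonal equation heq2 i
  have e2 : (fun y => f y * pd i (pd i h) y)
      = fun y => (m : ℝ) * pd i (pd i f) y + ρ * f y := by
    funext y; have := heq2 i y; linarith
  have d2 : pd j (fun y => f y * pd i (pd i h) y) x
      = pd j (fun y => (m : ℝ) * pd i (pd i f) y + ρ * f y) x := by rw [e2]
  rw [pd_mul j hfd' hhiid, pd_add j (hfiid.const_mul _) (hfd'.const_mul _),
    pd_const_mul j _ hfiid, pd_const_mul j _ hfd'] at d2
  -- Apply pd i to the off-diagonal equation heq1 i j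
  have e1 : (fun y => f y * pd j (pd i h) y)
      = fun y => (m : ℝ) * pd j (pd i f) y := by
    funext y; have := heq1 i j hij y; linarith
  have d1 : pd i (fun y => f y * pd j (pd i h) y) x
      = pd i (fun y => (m : ℝ) * pd j (pd i f) y) x := by rw [e1]
  rw [pd_mul i hfd' hhijd, pd_const_mul i _ hfijd] at d1
  -- Clairaut on the third derivatives
  have ch : pd i (pd j (pd i h)) x = pd j (pd i (pd i h)) x := pd_comm i j hhi x
  have cf : pd i (pd j (pd i f)) x = pd j (pd i (pd i f)) x := pd_comm i j hfi x
  rw [ch, cf] at d1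
  -- Combine: f_j * h_ii - f_i * h_ij = ρ f_j
  have key : pd j f x * pd i (pd i h) x - pd i f x * pd j (pd i h) x = ρ * pd j f x := by
    linarith
  -- Multiply by f and substitute the base equations
  have h1 := heq1 i j hij x
  have h2 := heq2 i x
  have hfx : f x ≠ 0 := (hfpos x).ne'
  have hm' : (m : ℝ) ≠ 0 := by
    exact_mod_cast Nat.one_le_iff_ne_zero.mp hm
  have hk := congrArg (fun t => f x * t) key
  have hmain : (m : ℝ) * (pd j f x * pd i (pd i f) x - pd i f x * pd j (pd i f) x) = 0 := by
    linear_combination hk - pd j f x * h2 + pd i f x * h1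
  rcases mul_eq_zero.mp hmain with h' | h'
  · exact absurd h' hm'
  · exact h'
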